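/- Let 1 ≤ p_i ≤ u_i < ∞ or p_i = u_i = ∞, i = 1,2, and j ∈ ℕ₀. If (p₁ ≤ p₂ and u₂ ≤ u₁), or (p₁ > p₂ and p₁/u₁ ≤ p₂/u₂), or p₁ = u₁ = ∞, then the nuclear norm of the identity map between the finite Morrey sequence spaces equals the dimension: ν(id_j: m^{2^{jd}}_{u₁,p₁} → m^{2^{jd}}_{u₂,p₂}) = 2^{jd}. -/

import Mathlib

open scoped ENNReal

/-- The index set `𝒦_j = {k ∈ ℤ^d : Q_{0,k} ⊆ Q_{-j,0}}`, identified with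
`(Fin d → Fin (2^j))` (the unit cubes inside the cube `[0, 2^j)^d`). -/
abbrev MorreyIdx (d j : ℕ) := Fin d → Fin (2 ^ j)

/-- `Q_{0,k} ⊆ Q_{-ν,m}` for a dyadic cube `Q_{-ν,m} ⊆ Q_{-j,0}` of side length `2^ν`,
where the cube is encoded by `m : Fin d → Fin (2^(j-ν))`: the condition is
`k i / 2^ν = m i` for all `i`. -/
def memSubcube {d j : ℕ} (ν : ℕ) (m : Fin d → ℕ) (k : MorreyIdx d j) : Prop :=
  ∀ i, (k i : ℕ) / 2 ^ ν = m i

instance {d j : ℕ} (ν : ℕ) (m : Fin d → ℕ) (k : MorreyIdx d j) :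
    Decidable (memSubcube ν m k) := by unfold memSubcube; infer_instance

/-- The norm of the finite-dimensional Morrey sequence space `m^{2^{jd}}_{u,p}`
for `0 < p ≤ u < ∞` or `p = u = ∞` (parameters in `ℝ≥0∞`); for `p = u = ∞` this is
the sup-norm of `ℓ∞^{2^{jd}}`.  For finite parameters,
`‖λ‖ = max_{ν ≤ j, Q_{-ν,m} ⊆ Q_{-j,0}} |Q_{-ν,m}|^{1/u - 1/p}
   (∑_{k : Q_{0,k} ⊆ Q_{-ν,m}} |λ_k|^p)^{1/p}`, with `|Q_{-ν,m}| = 2^{νd}`. -/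
noncomputable def mNorm (d j : ℕ) (u p : ℝ≥0∞) (lam : MorreyIdx d j → ℂ) : ℝ :=
  if p = ∞ then ⨆ k : MorreyIdx d j, ‖lam k‖
  else
    ⨆ ν : Fin (j + 1), ⨆ m : Fin d → Fin (2 ^ (j - (ν : ℕ))),
      (2 : ℝ) ^ ((((ν : ℕ) * d : ℕ) : ℝ) * (1 / u.toReal - 1 / p.toReal)) *
        (∑ k : MorreyIdx d j,
          if memSubcube (ν : ℕ) (fun i => (m i : ℕ)) k then ‖lam k‖ ^ p.toReal else 0)
          ^ (1 / p.toReal)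

/-- The dual norm of a functional `λ ↦ ∑_k f_k λ_k` on `(ℂ^{𝒦_j}, N)`. -/
noncomputable def mDualNorm (d j : ℕ) (N : (MorreyIdx d j → ℂ) → ℝ)
    (f : MorreyIdx d j → ℂ) : ℝ :=
  sInf {C : ℝ | 0 ≤ C ∧ ∀ lam : MorreyIdx d j → ℂ, ‖∑ k, f k * lam k‖ ≤ C * N lam}

/-- A nuclear representation of the identity map `(ℂ^{𝒦_j}, N₁) → (ℂ^{𝒦_j}, N₂)`:
functionals `a n` (given by their coefficient vectors, measured in the dual norm of
`N₁`) and vectors `y n` (measured in `N₂`) with summable norm products, reproducing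
every `λ` as `λ = ∑_n (∑_i a_{n,i} λ_i) y_n`. -/
def IsNuclearRepIdM (d j : ℕ) (N₁ N₂ : (MorreyIdx d j → ℂ) → ℝ)
    (a y : ℕ → MorreyIdx d j → ℂ) : Prop :=
  Summable (fun n => mDualNorm d j N₁ (a n) * N₂ (y n)) ∧
  ∀ (lam : MorreyIdx d j → ℂ) (k : MorreyIdx d j),
    HasSum (fun n => (∑ i, a n i * lam i) * y n k) (lam k)

/-- The nuclear norm of the identity map `(ℂ^{𝒦_j}, N₁) → (ℂ^{𝒦_j}, N₂)`:
the infimum of `∑_n ‖a n‖_{N₁'} ‖y n‖_{N₂}` over all nuclear representations. -/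
noncomputable def nucNormIdM (d j : ℕ) (N₁ N₂ : (MorreyIdx d j → ℂ) → ℝ) : ℝ :=
  sInf {c : ℝ | ∃ a y, IsNuclearRepIdM d j N₁ N₂ a y ∧
    c = ∑' n, mDualNorm d j N₁ (a n) * N₂ (y n)}

/-!
The nuclear norm of the identity of an `n`-dimensional space dominates its trace `n`: testing a
nuclear representation `id = ∑ₙ aₙ ⊗ yₙ` on the unit vectors gives `n = ∑ₙ aₙ(yₙ)`, and
`|aₙ(yₙ)| ≤ ‖aₙ‖' ‖yₙ‖₁ ≤ ‖aₙ‖' ‖yₙ‖₂` as soon as `‖·‖₁ ≤ ‖·‖₂`. The case hypotheses are exactly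
what gives this embedding of Morrey norms: Hölder's inequality on each dyadic cube when
`p₁ ≤ p₂`, and interpolation between `ℓ^{p₂}` on the cube and `ℓ^∞` when `p₂ < p₁`. Conversely
`id = ∑ₖ e_k' ⊗ e_k` costs at most `n`, since every Morrey norm dominates the coordinates and
gives the unit vectors norm at most one.
-/

open Finset

lemma apply_extend_zero {α β M N : Type*} [Zero M] [Zero N] {F : M → N} (hF : F 0 = 0)
    (e : α → β) (f : α → M) (b : β) :
    F (Function.extend e f 0 b) = Function.extend e (F ∘ f) 0 b := by
  rw [Function.apply_extend F]
  congr
  funext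
  simp [hF]

section NuclearNorm

variable {d j : ℕ} {N N₁ N₂ : (MorreyIdx d j → ℂ) → ℝ}

lemma mDualNorm_nonneg (f : MorreyIdx d j → ℂ) : 0 ≤ mDualNorm d j N f :=
  Real.sInf_nonneg fun _ hC => hC.1

lemma mDualNorm_le {f : MorreyIdx d j → ℂ} {C : ℝ} (hC : 0 ≤ C)
    (h : ∀ lam, ‖∑ k, f k * lam k‖ ≤ C * N lam) : mDualNorm d j N f ≤ C :=
  csInf_le ⟨0, fun _ hx => hx.1⟩ ⟨hC, h⟩

lemma mDualNorm_zero : mDualNorm d j N 0 = 0 :=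
  (mDualNorm_le le_rfl fun lam => by simp).antisymm (mDualNorm_nonneg 0)

lemma norm_sum_mul_le_mDualNorm_mul (hN : ∀ lam k, ‖lam k‖ ≤ N lam) (f y : MorreyIdx d j → ℂ) :
    ‖∑ k, f k * y k‖ ≤ mDualNorm d j N f * N y := by
  rcases (norm_nonneg (y 0)).trans (hN y 0) |>.eq_or_lt with hNy | hNy
  · obtain rfl : y = 0 := funext fun k => norm_le_zero_iff.mp ((hN y k).trans hNy.ge)
    simp [← hNy]
  · rw [← div_le_iff₀ hNy]
    refine le_csInf ⟨∑ k, ‖f k‖, sum_nonneg fun _ _ => norm_nonneg _, fun lam => ?_⟩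
      fun C hC => (div_le_iff₀ hNy).mpr (hC.2 y)
    calc ‖∑ k, f k * lam k‖ ≤ ∑ k, ‖f k‖ * ‖lam k‖ :=
          (norm_sum_le _ _).trans_eq (by simp only [norm_mul])
      _ ≤ (∑ k, ‖f k‖) * N lam := by
          rw [sum_mul]; gcongr with k; exact hN lam k

lemma sum_single_mul (lam : MorreyIdx d j → ℂ) (k : MorreyIdx d j) :
    ∑ i, (Pi.single k 1 : MorreyIdx d j → ℂ) i * lam i = lam k := by
  simp [Pi.single_apply]

lemma mDualNorm_single_le_one (hN : ∀ lam k, ‖lam k‖ ≤ N lam) (k : MorreyIdx d j) :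
    mDualNorm d j N (Pi.single k 1) ≤ 1 :=
  mDualNorm_le zero_le_one fun lam => by rw [sum_single_mul, one_mul]; exact hN lam k

lemma card_le_tsum_of_isNuclearRepIdM (hN₁ : ∀ lam k, ‖lam k‖ ≤ N₁ lam)
    (hN : ∀ lam, N₁ lam ≤ N₂ lam) {a y : ℕ → MorreyIdx d j → ℂ}
    (h : IsNuclearRepIdM d j N₁ N₂ a y) :
    (Fintype.card (MorreyIdx d j) : ℝ) ≤ ∑' n, mDualNorm d j N₁ (a n) * N₂ (y n) := by
  have htrace : HasSum (fun n => ∑ k, a n k * y n k) (Fintype.card (MorreyIdx d j) : ℂ) := by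
    have := hasSum_sum fun k (_ : k ∈ univ) => h.2 (Pi.single k 1) k
    simpa [Pi.single_apply, mul_comm] using this
  simpa using htrace.norm_le_of_bounded h.1.hasSum fun n =>
    (norm_sum_mul_le_mDualNorm_mul hN₁ (a n) (y n)).trans
      (mul_le_mul_of_nonneg_left (hN (y n)) (mDualNorm_nonneg _))

lemma exists_isNuclearRepIdM_tsum_le_card (hN₁ : ∀ lam k, ‖lam k‖ ≤ N₁ lam)
    (hN₂ : ∀ k, N₂ (Pi.single k 1) ≤ 1) :
    ∃ a y, IsNuclearRepIdM d j N₁ N₂ a y ∧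
      ∑' n, mDualNorm d j N₁ (a n) * N₂ (y n) ≤ Fintype.card (MorreyIdx d j) := by
  obtain ⟨e, he⟩ := Countable.exists_injective_nat (MorreyIdx d j)
  let a : ℕ → MorreyIdx d j → ℂ := Function.extend e (fun k => Pi.single k 1) 0
  have hcost : (fun n => mDualNorm d j N₁ (a n) * N₂ (a n)) =
      Function.extend e (fun k => mDualNorm d j N₁ (Pi.single k 1) * N₂ (Pi.single k 1)) 0 := by
    funext n
    exact apply_extend_zero (F := fun v => mDualNorm d j N₁ v * N₂ v) (by simp [mDualNorm_zero]) ..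
  have hterm (lam : MorreyIdx d j → ℂ) (k : MorreyIdx d j) :
      (fun n => (∑ i, a n i * lam i) * a n k) = Function.extend e (fun k' =>
        (∑ i, (Pi.single k' 1 : MorreyIdx d j → ℂ) i * lam i) *
          (Pi.single k' 1 : MorreyIdx d j → ℂ) k) 0 := by
    funext n
    exact apply_extend_zero (F := fun v : MorreyIdx d j → ℂ => (∑ i, v i * lam i) * v k)
      (by simp) ..
  refine ⟨a, a, ⟨?_, fun lam k => ?_⟩, ?_⟩
  · rw [hcost, summable_extend_zero he]
    exact Summable.of_finite
  · rw [hterm, hasSum_extend_zero he]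
    simpa [Pi.single_apply] using hasSum_fintype fun k' : MorreyIdx d j =>
      (∑ i, (Pi.single k' 1 : MorreyIdx d j → ℂ) i * lam i) * (Pi.single k' 1 : MorreyIdx d j → ℂ) k
  · rw [hcost, tsum_extend_zero he, tsum_fintype, Fintype.card_eq_sum_ones, Nat.cast_sum,
      Nat.cast_one]
    refine sum_le_sum fun k _ => ?_
    calc mDualNorm d j N₁ (Pi.single k 1) * N₂ (Pi.single k 1)
        ≤ mDualNorm d j N₁ (Pi.single k 1) * 1 :=
          mul_le_mul_of_nonneg_left (hN₂ k) (mDualNorm_nonneg _)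
      _ ≤ 1 := by simpa using mDualNorm_single_le_one hN₁ k

theorem nucNormIdM_eq_card (hN₁ : ∀ lam k, ‖lam k‖ ≤ N₁ lam) (hN : ∀ lam, N₁ lam ≤ N₂ lam)
    (hN₂ : ∀ k, N₂ (Pi.single k 1) ≤ 1) :
    nucNormIdM d j N₁ N₂ = Fintype.card (MorreyIdx d j) := by
  obtain ⟨a, y, hrep, hle⟩ := exists_isNuclearRepIdM_tsum_le_card hN₁ hN₂
  have hlower : ∀ c ∈ {c : ℝ | ∃ a y, IsNuclearRepIdM d j N₁ N₂ a y ∧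
      c = ∑' n, mDualNorm d j N₁ (a n) * N₂ (y n)}, (Fintype.card (MorreyIdx d j) : ℝ) ≤ c := by
    rintro _ ⟨a, y, h, rfl⟩
    exact card_le_tsum_of_isNuclearRepIdM hN₁ hN h
  rw [nucNormIdM]
  exact ((csInf_le ⟨_, hlower⟩ ⟨a, y, hrep, rfl⟩).trans hle).antisymm
    (le_csInf ⟨_, a, y, hrep, rfl⟩ hlower)

end NuclearNorm

section LpComparison

variable {ι : Type*} (F : Finset ι) {x : ι → ℝ}

lemma rpow_sum_rpow_le_card_rpow_mul (hx : ∀ i ∈ F, 0 ≤ x i) {a c : ℝ} (ha : 0 < a)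
    (hac : a ≤ c) :
    (∑ i ∈ F, x i ^ a) ^ (1 / a) ≤ (#F : ℝ) ^ (1 / a - 1 / c) * (∑ i ∈ F, x i ^ c) ^ (1 / c) := by
  have hc : 0 < c := ha.trans_le hac
  have hSa : 0 ≤ ∑ i ∈ F, x i ^ a := sum_nonneg fun i hi => Real.rpow_nonneg (hx i hi) a
  have hSc : 0 ≤ ∑ i ∈ F, x i ^ c := sum_nonneg fun i hi => Real.rpow_nonneg (hx i hi) c
  have hpow : (∑ i ∈ F, x i ^ a) ^ (c / a) ≤ (#F : ℝ) ^ (c / a - 1) * ∑ i ∈ F, x i ^ c := by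
    refine (Real.rpow_sum_le_const_mul_sum_rpow_of_nonneg F ((one_le_div ha).mpr hac)
      fun i hi => Real.rpow_nonneg (hx i hi) a).trans_eq ?_
    congr 1
    refine sum_congr rfl fun i hi => ?_
    rw [← Real.rpow_mul (hx i hi), mul_div_cancel₀ _ ha.ne']
  calc (∑ i ∈ F, x i ^ a) ^ (1 / a) = ((∑ i ∈ F, x i ^ a) ^ (c / a)) ^ (1 / c) := by
        rw [← Real.rpow_mul hSa]; congr 1; field_simp
    _ ≤ ((#F : ℝ) ^ (c / a - 1) * ∑ i ∈ F, x i ^ c) ^ (1 / c) := by gcongr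
    _ = (#F : ℝ) ^ (1 / a - 1 / c) * (∑ i ∈ F, x i ^ c) ^ (1 / c) := by
        rw [Real.mul_rpow (by positivity) hSc, ← Real.rpow_mul (Nat.cast_nonneg _)]
        congr 2
        field_simp

lemma rpow_sum_rpow_le_rpow_mul_rpow_sum_rpow (hx : ∀ i ∈ F, 0 ≤ x i) {M : ℝ} (hM : 0 ≤ M)
    (hxM : ∀ i ∈ F, x i ≤ M) {a c : ℝ} (hc : 0 < c) (hca : c ≤ a) :
    (∑ i ∈ F, x i ^ a) ^ (1 / a) ≤ M ^ (1 - c / a) * ((∑ i ∈ F, x i ^ c) ^ (1 / c)) ^ (c / a) := by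
  have ha : 0 < a := hc.trans_le hca
  have hSc : 0 ≤ ∑ i ∈ F, x i ^ c := sum_nonneg fun i hi => Real.rpow_nonneg (hx i hi) c
  have hsum : ∑ i ∈ F, x i ^ a ≤ M ^ (a - c) * ∑ i ∈ F, x i ^ c := by
    rw [mul_sum]
    refine sum_le_sum fun i hi => ?_
    calc x i ^ a = x i ^ (a - c) * x i ^ c := by
          rw [← Real.rpow_add' (hx i hi) (by positivity), sub_add_cancel]
      _ ≤ M ^ (a - c) * x i ^ c := mul_le_mul_of_nonneg_right
          (Real.rpow_le_rpow (hx i hi) (hxM i hi) (by linarith)) (Real.rpow_nonneg (hx i hi) c)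
  calc (∑ i ∈ F, x i ^ a) ^ (1 / a) ≤ (M ^ (a - c) * ∑ i ∈ F, x i ^ c) ^ (1 / a) := by
        gcongr
        exact sum_nonneg fun i hi => Real.rpow_nonneg (hx i hi) a
    _ = M ^ (1 - c / a) * ((∑ i ∈ F, x i ^ c) ^ (1 / c)) ^ (c / a) := by
        rw [Real.mul_rpow (by positivity) hSc, ← Real.rpow_mul hM, ← Real.rpow_mul hSc]
        congr 2 <;> field_simp

end LpComparison

def IsMorreyExponent (u p : ℝ≥0∞) : Prop :=
  (1 ≤ p ∧ p ≤ u ∧ u ≠ ∞) ∨ (p = ∞ ∧ u = ∞)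

lemma IsMorreyExponent.ne_zero {u p : ℝ≥0∞} (h : IsMorreyExponent u p) : p ≠ 0 := by
  rcases h with ⟨hp, -⟩ | ⟨hp, -⟩
  · exact (zero_lt_one.trans_le hp).ne'
  · simp [hp]

lemma IsMorreyExponent.le {u p : ℝ≥0∞} (h : IsMorreyExponent u p) : p ≤ u := by
  rcases h with ⟨-, hpu, -⟩ | ⟨hp, hu⟩
  · exact hpu
  · rw [hp, hu]

section MorreyNorm

variable {d j : ℕ}

def dyadicSubcube (j ν : ℕ) (m : Fin d → ℕ) : Finset (MorreyIdx d j) := {k | memSubcube ν m k}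

/-- A point of the cube is determined by its remainders modulo `2 ^ ν`. -/
lemma card_dyadicSubcube_le (ν : ℕ) (m : Fin d → ℕ) : #(dyadicSubcube j ν m) ≤ 2 ^ (ν * d) := by
  calc #(dyadicSubcube j ν m) ≤ #(univ : Finset (Fin d → Fin (2 ^ ν))) := by
        refine card_le_card_of_injOn (fun k i => ⟨k i % 2 ^ ν, Nat.mod_lt _ (Nat.two_pow_pos ν)⟩)
          (fun _ _ => mem_univ _) fun k₁ hk₁ k₂ hk₂ hmod => funext fun i => Fin.ext ?_
        have h₁ : memSubcube ν m k₁ := by simpa [dyadicSubcube] using hk₁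
        have h₂ : memSubcube ν m k₂ := by simpa [dyadicSubcube] using hk₂
        rw [← Nat.div_add_mod (k₁ i : ℕ) (2 ^ ν), ← Nat.div_add_mod (k₂ i : ℕ) (2 ^ ν), h₁ i,
          h₂ i]
        exact congrArg (2 ^ ν * m i + ·) (congrArg Fin.val (congrFun hmod i))
    _ = 2 ^ (ν * d) := by simp [pow_mul]

noncomputable def morreyTerm (u p : ℝ) (lam : MorreyIdx d j → ℂ) (ν : ℕ) (m : Fin d → ℕ) : ℝ :=
  (2 : ℝ) ^ (((ν * d : ℕ) : ℝ) * (1 / u - 1 / p)) *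
    (∑ k ∈ dyadicSubcube j ν m, ‖lam k‖ ^ p) ^ (1 / p)

lemma mNorm_eq_iSup_morreyTerm {u p : ℝ≥0∞} (hp : p ≠ ∞) (lam : MorreyIdx d j → ℂ) :
    mNorm d j u p lam = ⨆ ν : Fin (j + 1), ⨆ m : Fin d → Fin (2 ^ (j - ν)),
      morreyTerm u.toReal p.toReal lam ν fun i => m i := by
  simp only [mNorm, if_neg hp, morreyTerm, dyadicSubcube, sum_filter]

lemma morreyTerm_le_mNorm {u p : ℝ≥0∞} (hp : p ≠ ∞) (lam : MorreyIdx d j → ℂ)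
    (ν : Fin (j + 1)) (m : Fin d → Fin (2 ^ (j - ν))) :
    morreyTerm u.toReal p.toReal lam ν (fun i => m i) ≤ mNorm d j u p lam := by
  rw [mNorm_eq_iSup_morreyTerm hp]
  exact (le_ciSup (Set.finite_range _).bddAbove m).trans
    (le_ciSup (f := fun ν : Fin (j + 1) => ⨆ m : Fin d → Fin (2 ^ (j - ν)),
      morreyTerm u.toReal p.toReal lam ν fun i => m i) (Set.finite_range _).bddAbove ν)

lemma mNorm_le_of_forall_morreyTerm_le {u p : ℝ≥0∞} (hp : p ≠ ∞) (lam : MorreyIdx d j → ℂ)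
    {C : ℝ} (h : ∀ (ν : Fin (j + 1)) (m : Fin d → Fin (2 ^ (j - ν))),
      morreyTerm u.toReal p.toReal lam ν (fun i => m i) ≤ C) :
    mNorm d j u p lam ≤ C := by
  rw [mNorm_eq_iSup_morreyTerm hp]
  exact ciSup_le fun ν => ciSup_le fun m => h ν m

lemma morreyTerm_zero (u : ℝ) {p : ℝ} (hp : p ≠ 0) (lam : MorreyIdx d j → ℂ)
    (k : MorreyIdx d j) : morreyTerm u p lam 0 (fun i => k i) = ‖lam k‖ := by
  have hcube : dyadicSubcube j 0 (fun i => (k i : ℕ)) = {k} := by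
    ext k'
    simp [dyadicSubcube, memSubcube, funext_iff, Fin.ext_iff]
  rw [morreyTerm, hcube, sum_singleton, ← Real.rpow_mul (norm_nonneg _), mul_one_div_cancel hp]
  simp

lemma norm_le_mNorm {u p : ℝ≥0∞} (hp : p ≠ 0) (lam : MorreyIdx d j → ℂ) (k : MorreyIdx d j) :
    ‖lam k‖ ≤ mNorm d j u p lam := by
  by_cases hp' : p = ∞
  · rw [mNorm, if_pos hp']
    exact le_ciSup (f := fun k => ‖lam k‖) (Set.finite_range _).bddAbove k
  · exact (morreyTerm_zero _ (ENNReal.toReal_ne_zero.mpr ⟨hp, hp'⟩) lam k).symm.trans_le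
      (morreyTerm_le_mNorm hp' lam 0 fun i => Fin.cast (by simp) (k i))

lemma mNorm_single_le_one {u p : ℝ≥0∞} (hp : p ≠ 0) (hpu : p ≤ u) (k : MorreyIdx d j) :
    mNorm d j u p (Pi.single k 1) ≤ 1 := by
  by_cases hp' : p = ∞
  · rw [mNorm, if_pos hp']
    exact ciSup_le fun k' => by by_cases h : k' = k <;> simp [h]
  have hp₀ : 0 < p.toReal := ENNReal.toReal_pos hp hp'
  refine mNorm_le_of_forall_morreyTerm_le hp' _ fun ν m => ?_
  have hsum : ∑ k' ∈ dyadicSubcube j ν (fun i => m i),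
      ‖(Pi.single k 1 : MorreyIdx d j → ℂ) k'‖ ^ p.toReal ≤ 1 := by
    calc _ ≤ ∑ k', ‖(Pi.single k 1 : MorreyIdx d j → ℂ) k'‖ ^ p.toReal :=
          sum_le_sum_of_subset_of_nonneg (subset_univ _) fun _ _ _ => by positivity
      _ = 1 := by simp [Pi.single_apply, apply_ite, Real.zero_rpow hp₀.ne']
  have hexp : 1 / u.toReal ≤ 1 / p.toReal := by
    -- `u = ∞` has `toReal` zero, so `1 / u.toReal = 0` is the intended `1 / u`
    rcases eq_or_ne u ∞ with rfl | hu
    · simp [hp₀.le]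
    · exact one_div_le_one_div_of_le hp₀ (ENNReal.toReal_mono hu hpu)
  rw [morreyTerm, ← one_mul (1 : ℝ)]
  gcongr
  · exact Real.rpow_le_one_of_one_le_of_nonpos one_le_two
      (mul_nonpos_of_nonneg_of_nonpos (Nat.cast_nonneg _) (by linarith))
  · exact Real.rpow_le_one (sum_nonneg fun _ _ => by positivity) hsum (by positivity)

end MorreyNorm

section MorreyEmbedding

variable {d j : ℕ}

lemma morreyTerm_le_morreyTerm {a b c e : ℝ} (ha : 0 < a) (hac : a ≤ c) (he : 0 < e)
    (heb : e ≤ b) (lam : MorreyIdx d j → ℂ) (ν : ℕ) (m : Fin d → ℕ) :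
    morreyTerm b a lam ν m ≤ morreyTerm e c lam ν m := by
  set A : ℝ := ((ν * d : ℕ) : ℝ)
  set S := (∑ k ∈ dyadicSubcube j ν m, ‖lam k‖ ^ c) ^ (1 / c)
  have hcard : (#(dyadicSubcube j ν m) : ℝ) ≤ 2 ^ A := by
    rw [Real.rpow_natCast]
    exact_mod_cast card_dyadicSubcube_le ν m
  calc morreyTerm b a lam ν m
        ≤ 2 ^ (A * (1 / b - 1 / a)) * (((2 : ℝ) ^ A) ^ (1 / a - 1 / c) * S) := by
        rw [morreyTerm]
        gcongr
        refine (rpow_sum_rpow_le_card_rpow_mul _ (fun k _ => norm_nonneg (lam k)) ha hac).trans ?_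
        gcongr
        exact sub_nonneg.mpr (one_div_le_one_div_of_le ha hac)
    _ = 2 ^ (A * (1 / b - 1 / c)) * S := by
        rw [← mul_assoc, ← Real.rpow_mul zero_le_two, ← Real.rpow_add two_pos]
        ring_nf
    _ ≤ morreyTerm e c lam ν m := by
        rw [morreyTerm]
        gcongr
        exact one_le_two

lemma morreyTerm_le_of_morreyTerm_le {a b c e M : ℝ} (hc : 0 < c) (hca : c ≤ a)
    (hace : a / b ≤ c / e) {lam : MorreyIdx d j → ℂ} (hlam : ∀ k, ‖lam k‖ ≤ M) {ν : ℕ}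
    {m : Fin d → ℕ} (hM : morreyTerm e c lam ν m ≤ M) : morreyTerm b a lam ν m ≤ M := by
  have ha : 0 < a := hc.trans_le hca
  have hM₀ : 0 ≤ M := (norm_nonneg _).trans (hlam fun _ => ⟨0, Nat.two_pow_pos j⟩)
  set A : ℝ := ((ν * d : ℕ) : ℝ)
  set S := (∑ k ∈ dyadicSubcube j ν m, ‖lam k‖ ^ c) ^ (1 / c)
  have hS : S ≤ 2 ^ (A * (1 / c - 1 / e)) * M := by
    calc S = 2 ^ (A * (1 / c - 1 / e)) * (2 ^ (A * (1 / e - 1 / c)) * S) := by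
          rw [← mul_assoc, ← Real.rpow_add two_pos,
            show A * (1 / c - 1 / e) + A * (1 / e - 1 / c) = 0 by ring, Real.rpow_zero, one_mul]
      _ ≤ 2 ^ (A * (1 / c - 1 / e)) * M := by gcongr; exact hM
  have hMM : M ^ (1 - c / a) * M ^ (c / a) = M := by
    rw [← Real.rpow_add' hM₀ (by simp), sub_add_cancel, Real.rpow_one]
  have hexp : A * (1 / b - 1 / a) + A * (1 / c - 1 / e) * (c / a) = A / a * (a / b - c / e) := by
    field_simp
    ring
  calc morreyTerm b a lam ν m ≤ 2 ^ (A * (1 / b - 1 / a)) * (M ^ (1 - c / a) * S ^ (c / a)) := by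
        rw [morreyTerm]
        gcongr
        exact rpow_sum_rpow_le_rpow_mul_rpow_sum_rpow _ (fun k _ => norm_nonneg _) hM₀
          (fun k _ => hlam k) hc hca
    _ ≤ 2 ^ (A * (1 / b - 1 / a)) *
          (M ^ (1 - c / a) * (2 ^ (A * (1 / c - 1 / e)) * M) ^ (c / a)) := by
        gcongr
    _ = 2 ^ (A * (1 / b - 1 / a)) * 2 ^ (A * (1 / c - 1 / e) * (c / a)) *
          (M ^ (1 - c / a) * M ^ (c / a)) := by
        rw [Real.mul_rpow (by positivity) hM₀, ← Real.rpow_mul zero_le_two]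
        ring
    _ = 2 ^ (A / a * (a / b - c / e)) * M := by rw [← Real.rpow_add two_pos, hexp, hMM]
    _ ≤ M := mul_le_of_le_one_left hM₀ <| Real.rpow_le_one_of_one_le_of_nonpos one_le_two <|
        mul_nonpos_of_nonneg_of_nonpos (by positivity) (sub_nonpos.mpr hace)

lemma mNorm_le_of_eq_top {u₁ p₁ u₂ p₂ : ℝ≥0∞} (hp₁ : p₁ = ∞) (hp₂ : p₂ ≠ 0)
    (lam : MorreyIdx d j → ℂ) : mNorm d j u₁ p₁ lam ≤ mNorm d j u₂ p₂ lam := by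
  rw [mNorm, if_pos hp₁]
  exact ciSup_le fun k => norm_le_mNorm hp₂ lam k

theorem mNorm_le_mNorm {u₁ p₁ u₂ p₂ : ℝ≥0∞} (h₁ : IsMorreyExponent u₁ p₁)
    (h₂ : IsMorreyExponent u₂ p₂)
    (hcase : (p₁ ≤ p₂ ∧ u₂ ≤ u₁) ∨ (p₂ < p₁ ∧ p₁ / u₁ ≤ p₂ / u₂) ∨ (p₁ = ∞ ∧ u₁ = ∞))
    (lam : MorreyIdx d j → ℂ) : mNorm d j u₁ p₁ lam ≤ mNorm d j u₂ p₂ lam := by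
  rcases h₁ with ⟨hp₁, hpu₁, hu₁⟩ | ⟨hp₁, -⟩
  swap
  · exact mNorm_le_of_eq_top hp₁ h₂.ne_zero lam
  have hp₁' : p₁ ≠ ∞ := ne_top_of_le_ne_top hu₁ hpu₁
  rcases h₂ with ⟨hp₂, hpu₂, hu₂⟩ | ⟨hp₂, hu₂⟩
  swap
  · exfalso
    rcases hcase with ⟨-, hu⟩ | ⟨hp, -⟩ | ⟨hp, -⟩
    · exact hu₁ (top_le_iff.mp (hu₂ ▸ hu))
    · exact not_top_lt (hp₂ ▸ hp)
    · exact hp₁' hp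
  have hp₂' : p₂ ≠ ∞ := ne_top_of_le_ne_top hu₂ hpu₂
  have ha : 0 < p₁.toReal := ENNReal.toReal_pos (zero_lt_one.trans_le hp₁).ne' hp₁'
  have hc : 0 < p₂.toReal := ENNReal.toReal_pos (zero_lt_one.trans_le hp₂).ne' hp₂'
  refine mNorm_le_of_forall_morreyTerm_le hp₁' lam fun ν m => ?_
  rcases hcase with ⟨hp, hu⟩ | ⟨hp, hpu⟩ | ⟨hp, -⟩
  · exact (morreyTerm_le_morreyTerm ha (ENNReal.toReal_mono hp₂' hp)
      (hc.trans_le (ENNReal.toReal_mono hu₂ hpu₂)) (ENNReal.toReal_mono hu₁ hu) lam ν _).trans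
      (morreyTerm_le_mNorm hp₂' lam ν m)
  · have hpu' : p₁.toReal / u₁.toReal ≤ p₂.toReal / u₂.toReal := by
      rw [← ENNReal.toReal_div, ← ENNReal.toReal_div]
      exact ENNReal.toReal_mono (ENNReal.div_ne_top hp₂'
        (zero_lt_one.trans_le (hp₂.trans hpu₂)).ne') hpu
    exact morreyTerm_le_of_morreyTerm_le hc (ENNReal.toReal_mono hp₁' hp.le) hpu'
      (norm_le_mNorm (zero_lt_one.trans_le hp₂).ne' lam) (morreyTerm_le_mNorm hp₂' lam ν m)
  · exact absurd hp hp₁'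

end MorreyEmbedding

theorem stmt9_general (d : ℕ) (u₁ p₁ u₂ p₂ : ℝ≥0∞)
    (h₁ : (1 ≤ p₁ ∧ p₁ ≤ u₁ ∧ u₁ ≠ ∞) ∨ (p₁ = ∞ ∧ u₁ = ∞))
    (h₂ : (1 ≤ p₂ ∧ p₂ ≤ u₂ ∧ u₂ ≠ ∞) ∨ (p₂ = ∞ ∧ u₂ = ∞))
    (j : ℕ)
    (hcase : (p₁ ≤ p₂ ∧ u₂ ≤ u₁) ∨ (p₂ < p₁ ∧ p₁ / u₁ ≤ p₂ / u₂) ∨ (p₁ = ∞ ∧ u₁ = ∞)) :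
    nucNormIdM d j (mNorm d j u₁ p₁) (mNorm d j u₂ p₂) = (2 : ℝ) ^ (j * d) := by
  have h₁ : IsMorreyExponent u₁ p₁ := h₁
  have h₂ : IsMorreyExponent u₂ p₂ := h₂
  rw [nucNormIdM_eq_card (norm_le_mNorm h₁.ne_zero) (mNorm_le_mNorm h₁ h₂ hcase)
    (mNorm_single_le_one h₂.ne_zero h₂.le)]
  simp [pow_mul]

/-- `ν(id_j : m^{2^{jd}}_{u₁,p₁} → m^{2^{jd}}_{u₂,p₂}) = 2^{jd}` in the
cases (`p₁ ≤ p₂` and `u₂ ≤ u₁`), or (`p₁ > p₂` and `p₁/u₁ ≤ p₂/u₂`), or `p₁ = u₁ = ∞`. -/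
theorem stmt9 (d : ℕ) (hd : 0 < d) (u₁ p₁ u₂ p₂ : ℝ≥0∞)
    (h₁ : (1 ≤ p₁ ∧ p₁ ≤ u₁ ∧ u₁ ≠ ∞) ∨ (p₁ = ∞ ∧ u₁ = ∞))
    (h₂ : (1 ≤ p₂ ∧ p₂ ≤ u₂ ∧ u₂ ≠ ∞) ∨ (p₂ = ∞ ∧ u₂ = ∞))
    (j : ℕ)
    (hcase : (p₁ ≤ p₂ ∧ u₂ ≤ u₁) ∨ (p₂ < p₁ ∧ p₁ / u₁ ≤ p₂ / u₂) ∨ (p₁ = ∞ ∧ u₁ = ∞)) :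
    nucNormIdM d j (mNorm d j u₁ p₁) (mNorm d j u₂ p₂) = (2 : ℝ) ^ (j * d) :=
  stmt9_general d u₁ p₁ u₂ p₂ h₁ h₂ j hcase
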